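/- For each n ≥ 0, let T(q,n) = ∑_{λ ⊢ n} 2^{r(λ)} binom(q; E(λ)) where the sum is over partitions λ of n, r(λ) is the number of parts, and binom(q; E(λ)) is the multinomial coefficient in the multiplicities of λ. Then T(q,n) = ∑_{i=1}^{n} 2^i binom(n−1, i−1) binom(q, i) as polynomials in q. -/

import Mathlib

/-!
Since `binom(q; E(λ)) = binom(q, r) · r! / ∏_b m_b!`, and `r! / ∏_b m_b!` is the number of distinct
orderings of the parts of `λ`, i.e. the number of compositions of `n` that rearrange to `λ`, the
left side is `∑_c 2^{ℓ(c)} binom(q, ℓ(c))` over all compositions `c` of `n`. A composition of `n`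
with `i` parts is determined by its `i - 1` interior cut points among `1, …, n - 1`, so there are
`binom(n - 1, i - 1)` of them.
-/

open Finset

namespace Multiset
variable {α : Type*} [DecidableEq α]

theorem prod_factorial_count_eq_count_mul_erase (s : Multiset α) {a : α} (ha : a ∈ s) :
    ∏ b ∈ s.toFinset, (s.count b).factorial
      = s.count a * ∏ b ∈ (s.erase a).toFinset, ((s.erase a).count b).factorial := by
  have hsupp : ∏ b ∈ (s.erase a).toFinset, ((s.erase a).count b).factorial
      = ∏ b ∈ s.toFinset, ((s.erase a).count b).factorial :=
    prod_subset (toFinset_subset.mpr (subset_of_le (erase_le a s))) fun b _ hb => by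
      rw [count_eq_zero.mpr (by simpa using hb), Nat.factorial_zero]
  have haF : a ∈ s.toFinset := mem_toFinset.mpr ha
  rw [hsupp, ← mul_prod_erase _ _ haF, ← mul_prod_erase _ _ haF, count_erase_self, ← mul_assoc,
    Nat.mul_factorial_pred (count_pos.mpr ha).ne']
  congr 1
  exact prod_congr rfl fun b hb => by rw [count_erase_of_ne (ne_of_mem_erase hb)]

theorem toFinset_lists_eq_biUnion {s : Multiset α} (hs : s ≠ 0) :
    s.lists.toFinset
      = s.toFinset.biUnion fun a => (s.erase a).lists.toFinset.image (List.cons a) := by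
  ext (_ | ⟨a, l⟩)
  · simpa [mem_lists_iff] using fun h => hs h
  · simp only [mem_toFinset, mem_lists_iff, quot_mk_to_coe, mem_biUnion, mem_image,
      List.cons.injEq]
    constructor
    · rintro rfl
      exact ⟨a, by simp, l, by simp, rfl, rfl⟩
    · rintro ⟨b, hb, l', hl', rfl, rfl⟩
      rw [← cons_coe, ← hl', cons_erase hb]

theorem card_toFinset_lists_mul_prod_factorial_count (s : Multiset α) :
    #s.lists.toFinset * ∏ b ∈ s.toFinset, (s.count b).factorial = (card s).factorial := by
  induction s using strongInductionOn with
  | ih s ih =>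
  rcases eq_or_ne s 0 with rfl | hs
  · simp [← coe_nil, lists_coe]
  have hdisj : (s.toFinset : Set α).PairwiseDisjoint
      fun a => (s.erase a).lists.toFinset.image (List.cons a) := by
    intro a _ b _ hab
    rw [Function.onFun, Finset.disjoint_left]
    simp only [mem_image]
    rintro _ ⟨_, _, rfl⟩ ⟨_, _, h⟩
    exact hab (List.cons.inj h).1.symm
  have hterm : ∀ a ∈ s.toFinset, #((s.erase a).lists.toFinset.image (List.cons a))
      * ∏ b ∈ s.toFinset, (s.count b).factorial = s.count a * (card s - 1).factorial := by
    intro a ha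
    have ha : a ∈ s := mem_toFinset.mp ha
    rw [card_image_of_injective _ List.cons_injective,
      prod_factorial_count_eq_count_mul_erase s ha, mul_left_comm,
      ih _ (erase_lt.mpr ha), card_erase_of_mem ha, Nat.pred_eq_sub_one]
  rw [toFinset_lists_eq_biUnion hs, card_biUnion hdisj, sum_mul, sum_congr rfl hterm,
    ← sum_mul, toFinset_sum_count_eq, Nat.mul_factorial_pred ((card_pos.mpr hs).ne')]

theorem inv_prod_factorial_count {K : Type*} [Field K] [CharZero K] (s : Multiset α) :
    (∏ b ∈ s.toFinset, ((s.count b).factorial : K))⁻¹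
      = #s.lists.toFinset / (card s).factorial := by
  have h := congrArg (Nat.cast : ℕ → K) (card_toFinset_lists_mul_prod_factorial_count s)
  push_cast at h
  have hprod : ∏ b ∈ s.toFinset, ((s.count b).factorial : K) ≠ 0 :=
    prod_ne_zero_iff.mpr fun _ _ => Nat.cast_ne_zero.mpr (Nat.factorial_ne_zero _)
  rw [eq_div_iff (Nat.cast_ne_zero.mpr (Nat.factorial_ne_zero _)), ← h, inv_mul_eq_div,
    mul_div_cancel_right₀ _ hprod]

end Multiset

theorem CompositionAsSet.card_compositionAsSetEquiv_add_one {n : ℕ} (hn : 0 < n)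
    (d : CompositionAsSet n) : #(compositionAsSetEquiv n d) + 1 = d.length := by
  have hmem (i : Fin (n - 1)) : i ∈ compositionAsSetEquiv n d ↔
      (⟨1 + i, by omega⟩ : Fin (n + 1)) ∈ d.boundaries := by
    simp [compositionAsSetEquiv]
  have hinterior :
      #(compositionAsSetEquiv n d) = #((d.boundaries.erase 0).erase (Fin.last n)) := by
    refine card_bij (fun i _ => ⟨1 + i, by omega⟩) (fun i hi => ?_) (fun i _ j _ h => ?_) ?_
    · simp only [mem_erase, ne_eq, Fin.ext_iff, Fin.val_last, Fin.val_zero, ← hmem, hi, and_true]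
      omega
    · simp only [Fin.mk.injEq, Nat.add_left_cancel_iff] at h
      exact Fin.ext h
    · intro j hj
      simp only [mem_erase, ne_eq, Fin.ext_iff, Fin.val_last, Fin.val_zero] at hj
      have hj1 : 1 + (j - 1 : ℕ) = j := by omega
      refine ⟨⟨j - 1, by omega⟩, (hmem _).mpr ?_, Fin.ext hj1⟩
      simpa only [hj1] using hj.2.2
  have h0 : (0 : Fin (n + 1)) ∈ d.boundaries := d.zero_mem
  have hlast : Fin.last n ∈ d.boundaries.erase 0 :=
    mem_erase.mpr ⟨fun h => by simp only [Fin.ext_iff, Fin.val_last, Fin.val_zero] at h; omega,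
      d.getLast_mem⟩
  have hpos := card_pos.mpr ⟨_, hlast⟩
  rw [card_erase_of_mem h0, d.card_boundaries_eq_succ_length] at hpos
  rw [hinterior, card_erase_of_mem hlast, card_erase_of_mem h0, d.card_boundaries_eq_succ_length]
  omega

theorem Composition.sum_apply_length {M : Type*} [AddCommMonoid M] {n : ℕ} (hn : 0 < n)
    (f : ℕ → M) :
    ∑ c : Composition n, f c.length = ∑ i ∈ Icc 1 n, (n - 1).choose (i - 1) • f i := by
  let E := (compositionEquiv n).trans (compositionAsSetEquiv n)
  have hlen (c : Composition n) : c.length = #(E c) + 1 := by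
    rw [← c.toCompositionAsSet_length]
    exact (CompositionAsSet.card_compositionAsSetEquiv_add_one hn _).symm
  calc ∑ c : Composition n, f c.length
      = ∑ s : Finset (Fin (n - 1)), f (#s + 1) := by
        simp only [hlen]; exact E.sum_comp fun s => f (#s + 1)
    _ = ∑ m ∈ range (n - 1 + 1), (n - 1).choose m • f (m + 1) := by
        rw [← powerset_univ, sum_powerset_apply_card (fun m => f (m + 1)), card_univ,
          Fintype.card_fin]
    _ = ∑ i ∈ Icc 1 n, (n - 1).choose (i - 1) • f i := by
        rw [← Nat.Ico_zero_eq_range]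
        refine (sum_Ico_add' (fun i => (n - 1).choose (i - 1) • f i) 0 (n - 1 + 1) 1).trans ?_
        rw [zero_add, Nat.sub_add_cancel hn, Ico_add_one_right_eq_Icc]

theorem Nat.Partition.card_ofComposition_fiber {n : ℕ} (P : n.Partition) :
    #{c : Composition n | ofComposition n c = P} = #P.parts.lists.toFinset := by
  refine card_bij (fun c _ => c.blocks) (fun c hc => ?_) (fun c _ c' _ h => Composition.ext h) ?_
  · simp only [mem_filter_univ] at hc
    simp [← hc]
  · intro l hl
    have hP : P.parts = l := by simpa [Multiset.mem_lists_iff] using hl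
    refine ⟨⟨l, fun hi => P.parts_pos (by simpa [hP] using hi), by
      simpa [hP] using P.parts_sum⟩, ?_, rfl⟩
    exact (mem_filter_univ _).mpr (Nat.Partition.ext hP.symm)

theorem Nat.Partition.sum_card_lists_smul {M : Type*} [AddCommMonoid M] (n : ℕ) (f : ℕ → M) :
    ∑ P : n.Partition, #P.parts.lists.toFinset • f (Multiset.card P.parts)
      = ∑ c : Composition n, f c.length := by
  rw [← sum_fiberwise univ (ofComposition n)]
  refine sum_congr rfl fun P _ => ?_
  rw [← card_ofComposition_fiber, ← sum_const]
  refine sum_congr rfl fun c hc => ?_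
  rw [← (mem_filter_univ c).mp hc]
  simp

open Polynomial

/-- With `T(q,n) = ∑_{λ ⊢ n} 2^{r(λ)} binom(q; E(λ))`, one has
`T(q,n) = ∑_{i=1}^{n} 2^i binom(n−1, i−1) binom(q, i)` as polynomials in `q`. -/
theorem partition_two_pow_multinomial_sum (n : ℕ) (hn : 1 ≤ n) :
    ∑ P : n.Partition,
        (2 : ℚ[X]) ^ Multiset.card P.parts *
          ((∏ b ∈ P.parts.toFinset, ((P.parts.count b).factorial : ℚ))⁻¹ •
            ∏ i ∈ Finset.range (Multiset.card P.parts), ((X : ℚ[X]) - (i : ℚ[X])))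
      = ∑ i ∈ Finset.Icc 1 n,
          (2 : ℚ[X]) ^ i * ((n - 1).choose (i - 1) : ℚ[X]) *
            ((i.factorial : ℚ)⁻¹ • ∏ j ∈ Finset.range i, ((X : ℚ[X]) - (j : ℚ[X]))) := by
  let g (k : ℕ) : ℚ[X] := 2 ^ k * ((k.factorial : ℚ)⁻¹ • ∏ j ∈ range k, (X - (j : ℚ[X])))
  calc _ = ∑ P : n.Partition, #P.parts.lists.toFinset • g (Multiset.card P.parts) := by
        refine sum_congr rfl fun P _ => ?_
        rw [Multiset.inv_prod_factorial_count, div_eq_mul_inv, mul_smul, Nat.cast_smul_eq_nsmul,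
          mul_smul_comm]
    _ = ∑ c : Composition n, g c.length := Nat.Partition.sum_card_lists_smul n g
    _ = ∑ i ∈ Icc 1 n, (n - 1).choose (i - 1) • g i := Composition.sum_apply_length hn g
    _ = _ := sum_congr rfl fun i _ => by simp only [g, nsmul_eq_mul]; ring
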